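/- In the random-translation setting there exists a constant c > 0 such that for all distinct u, v ∈ Σ^∞ and all ρ > 0, P{ω : |Π^ω(u) − Π^ω(v)| ≤ ρ} ≤ c · ρ^d / φ^d(T_{u∧v}). -/

import Mathlib

open Filter MeasureTheory Set
open scoped ENNReal NNReal Topology

noncomputable section

namespace MoranPaper


/-- `ℝ^d` as a Euclidean space. -/
abbrev Rd (d : ℕ) := EuclideanSpace ℝ (Fin d)

/-- The singular values of a `d × d` real matrix, in decreasing order, `0`-indexed:
`sv d T 0 = α₁(T)` is the largest singular value, `sv d T (d-1) = α_d(T)` the smallest.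
(Junk value `0` for indices `≥ d`.) -/
theorem _root_.Matrix.isHermitian_transpose_mul_self {m : Type*} [Fintype m]
    (A : Matrix m m ℝ) : (A.transpose * A).IsHermitian := by
  have h := Matrix.isHermitian_conjTranspose_mul_self A
  simpa [Matrix.conjTranspose_eq_transpose_of_trivial] using h

def sv (d : ℕ) (T : Matrix (Fin d) (Fin d) ℝ) (m : ℕ) : ℝ :=
  if h : m < d then
    (fun j => Real.sqrt ((Matrix.isHermitian_transpose_mul_self T).eigenvalues j))
      (Tuple.sort
        (fun j => Real.sqrt ((Matrix.isHermitian_transpose_mul_self T).eigenvalues j))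
        (Fin.rev ⟨m, h⟩))
  else 0

/-- The singular value function `φ^s(T)`: for `0 < s ≤ d` with `m - 1 < s ≤ m`,
`φ^s(T) = α₁(T)⋯α_{m-1}(T)·α_m(T)^{s-m+1}`; `φ^0(T) = 1`; for `s > d`,
`φ^s(T) = (α₁(T)⋯α_d(T))^{s/d} = |det T|^{s/d}`. -/
def phi (d : ℕ) (T : Matrix (Fin d) (Fin d) ℝ) (s : ℝ) : ℝ :=
  if s ≤ 0 then 1
  else if s ≤ d then
    (∏ i ∈ Finset.range (⌈s⌉₊ - 1), sv d T i) * sv d T (⌈s⌉₊ - 1) ^ (s - ⌈s⌉₊ + 1)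
  else (∏ i ∈ Finset.range d, sv d T i) ^ (s / d)

variable (n : ℕ → ℕ)

/-- Finite words of length `k`: `Σ^k` (`0`-indexed levels: position `i` uses alphabet `Fin (n i)`). -/
abbrev Word (k : ℕ) := ∀ i : Fin k, Fin (n i)

/-- All finite words: `Σ^*`. -/
abbrev FinWord := Σ k : ℕ, Word n k

/-- Infinite words: `Σ^∞`. -/
abbrev InfWord := ∀ k : ℕ, Fin (n k)

/-- Drop the last letter of a word: `u ↦ u⁻`. -/
def wInit {k : ℕ} (u : Word n (k + 1)) : Word n k := fun i => u i.castSucc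

/-- The initial word `u|k` of an infinite word `u`. -/
def wTake (u : InfWord n) (k : ℕ) : Word n k := fun i => u i

/-- The cylinder `C_u ⊆ Σ^∞` of a finite word `u`. -/
def cylinder {k : ℕ} (u : Word n k) : Set (InfWord n) := {v | ∀ i : Fin k, v i = u i}

/-- The length of the maximal common initial word `u ∧ v` of two infinite words. -/
def meetLen (u v : InfWord n) : ℕ := sInf {k : ℕ | u k ≠ v k}

variable {d : ℕ} (T : ∀ k : ℕ, Fin (n k) → Matrix (Fin d) (Fin d) ℝ)

/-- `T_u = T_{1,u_1} T_{2,u_2} ⋯ T_{k,u_k}` for a finite word `u`. -/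
def Tword {k : ℕ} (u : Word n k) : Matrix (Fin d) (Fin d) ℝ :=
  (List.ofFn fun i : Fin k => T i (u i)).prod

/-- The sum `Σ_{u ∈ A} φ^s(T_u)` over a set of finite words, valued in `ℝ≥0∞`. -/
def covSum (s : ℝ) (A : Set (FinWord n)) : ℝ≥0∞ :=
  ∑' u : A, ENNReal.ofReal (phi d (Tword n T u.1.2) s)

/-- The premeasure `M^s_{(k)}(G)`: infimum of `Σ_u φ^s(T_u)` over covers of `G` by cylinders
of words of length at least `k`. -/
def Mk (s : ℝ) (k : ℕ) (G : Set (InfWord n)) : ℝ≥0∞ :=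
  ⨅ (A : Set (FinWord n)) (_ : ∀ u ∈ A, k ≤ u.1)
    (_ : G ⊆ ⋃ u ∈ A, cylinder n u.2), covSum n T s A

/-- The net measure `M^s(G) = lim_{k → ∞} M^s_{(k)}(G)` (the limit of the nondecreasing
sequence `M^s_{(k)}(G)`, i.e. its supremum). -/
def Mnet (s : ℝ) (G : Set (InfWord n)) : ℝ≥0∞ := ⨆ k : ℕ, Mk n T s k G

/-- The critical value `s_A = inf {s : M^s(Σ^∞) = 0}`. -/
def sA : ℝ := sInf {s : ℝ | Mnet n T s univ = 0}

/-- The cut-set `Σ^*(s, ε)`: words `u` (of positive length) with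
`α_m(T_{u⁻}) > ε` and `α_m(T_u) ≤ ε`, where `m - 1 < s ≤ m`. -/
def cutSet (s ε : ℝ) : Set (FinWord n) :=
  {w | ∃ (k : ℕ) (u : Word n (k + 1)), w = ⟨k + 1, u⟩ ∧
    ε < sv d (Tword n T (wInit n u)) (⌈s⌉₊ - 1) ∧ sv d (Tword n T u) (⌈s⌉₊ - 1) ≤ ε}

/-- `Σ_{u ∈ Σ^*(s,ε)} φ^s(T_u)`. -/
def cutSum (s ε : ℝ) : ℝ≥0∞ := covSum n T s (cutSet n T s ε)

/-- The critical value `s^* = inf {s > 0 : limsup_{ε → 0⁺} Σ_{u ∈ Σ^*(s,ε)} φ^s(T_u) < ∞}`. -/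
def sStar : ℝ :=
  sInf {s : ℝ | 0 < s ∧ limsup (fun ε : ℝ => cutSum n T s ε) (𝓝[>] 0) < ⊤}

/-- `N_ε(A)`: the smallest number of sets of diameter at most `ε` needed to cover `A`
(`∞` if there is no such finite cover), valued in `ℝ≥0∞`. -/
def Ncov {X : Type*} [PseudoEMetricSpace X] (A : Set X) (ε : ℝ) : ℝ≥0∞ :=
  ⨅ (C : Finset (Set X)) (_ : A ⊆ ⋃ c ∈ C, c)
    (_ : ∀ c ∈ C, EMetric.diam c ≤ ENNReal.ofReal ε), (C.card : ℝ≥0∞)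

/-- The upper box-counting dimension: `limsup_{ε → 0⁺} log N_ε(A) / (- log ε)`. -/
def ubDim {X : Type*} [PseudoEMetricSpace X] (A : Set X) : ℝ :=
  limsup (fun ε : ℝ => Real.log (Ncov A ε).toReal / (-Real.log ε)) (𝓝[>] 0)

/-- The lower box-counting dimension: `liminf_{ε → 0⁺} log N_ε(A) / (- log ε)`. -/
def lbDim {X : Type*} [PseudoEMetricSpace X] (A : Set X) : ℝ :=
  liminf (fun ε : ℝ => Real.log (Ncov A ε).toReal / (-Real.log ε)) (𝓝[>] 0)

section Moran

variable (ω : ∀ k : ℕ, Word n (k + 1) → Rd d)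

/-- The affine map `x ↦ T_{k, u_k} x + ω_u` determined by the last letter of `u` and the
translation attached to `u`. -/
def stepMap (k : ℕ) (u : Word n (k + 1)) : Rd d → Rd d :=
  fun x => Matrix.toEuclideanLin (T k (u (Fin.last k))) x + ω k u

/-- The composition `Ψ_u = Ψ_{u_1} ∘ ⋯ ∘ Ψ_{u_k}`, where `Ψ_{u_j}(x) = T_{j,u_j} x + ω_{u|j}`. -/
def PsiW : ∀ k : ℕ, Word n k → Rd d → Rd d
  | 0, _ => id
  | (k + 1), u => PsiW k (wInit n u) ∘ stepMap n T ω k u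

/-- The basic set `J_u = Ψ_u(J)`. -/
def Ju (J : Set (Rd d)) (k : ℕ) (u : Word n k) : Set (Rd d) := PsiW n T ω k u '' J

/-- The self-affine Moran set `E = ⋂_{k ≥ 1} ⋃_{u ∈ Σ^k} J_u`. -/
def Eset (J : Set (Rd d)) : Set (Rd d) :=
  ⋂ k : ℕ, ⋃ u : Word n (k + 1), Ju n T ω J (k + 1) u

/-- The Moran structure conditions: `J` is compact with nonempty interior, each `J_{ui}` is a
subset of `J_u`, and the maximal diameter of level-`k` basic sets tends to `0`. -/
def IsMoran (J : Set (Rd d)) : Prop :=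
  IsCompact J ∧ (interior J).Nonempty ∧
    (∀ (k : ℕ) (u : Word n (k + 1)), Ju n T ω J (k + 1) u ⊆ Ju n T ω J k (wInit n u)) ∧
    Tendsto (fun k : ℕ => ⨆ u : Word n k, EMetric.diam (Ju n T ω J k u)) atTop (𝓝 0)

/-- The standing assumptions on the matrices: each `T_{k,j}` is nonsingular, and
`0 < α₋ ≤ α₊ < 1` where `α₋ = inf α_d(T_{k,j})` and `α₊ = sup α₁(T_{k,j})`. -/
def GoodMatrices : Prop :=
  (∀ (k : ℕ) (j : Fin (n k)), (T k j).det ≠ 0) ∧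
    ∃ am ap : ℝ, 0 < am ∧ ap < 1 ∧
      ∀ (k : ℕ) (j : Fin (n k)), am ≤ sv d (T k j) (d - 1) ∧ sv d (T k j) 0 ≤ ap

end Moran


section Random

variable {Ω : Type*} [MeasurableSpace Ω] (Pr : Measure Ω)
variable (W : (Σ k : ℕ, Word n (k + 1)) → Ω → Rd d)

/-- The random projection `Π^ω(u) = Σ_{k ≥ 0} T_{u|k} ω_{u|(k+1)}`, where
`ω = {ω_w : w ∈ Σ^*}` is the family of random translation vectors,
realized as random variables `W w` on a probability space `Ω`. -/
def PiRandom (θ : Ω) (u : InfWord n) : Rd d :=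
  ∑' k : ℕ, Matrix.toEuclideanLin (Tword n T (wTake n u k)) (W ⟨k, wTake n u (k + 1)⟩ θ)

/-- The self-affine Moran set with random translations, `E^ω = Π^ω(Σ^∞)`. -/
def EsetRandom (θ : Ω) : Set (Rd d) := range (PiRandom n T W θ)

/-- The random-translation setting: `Pr` is a probability law on `Ω`; the translations
`ω_w = W w`, `w ∈ Σ^*`, are independent identically distributed random vectors taking values
in a bounded region `D ⊆ ℝ^d`, whose common distribution `P` is absolutely continuous with
respect to `d`-dimensional Lebesgue measure, with bounded density. -/
def RandomTranslations (D : Set (Rd d)) (P : Measure (Rd d)) : Prop :=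
  IsProbabilityMeasure Pr ∧ Bornology.IsBounded D ∧ D.Nonempty ∧
    IsProbabilityMeasure P ∧ P Dᶜ = 0 ∧
    (∃ C : ℝ≥0, ∃ f : Rd d → ℝ≥0∞, (∀ x, f x ≤ C) ∧ P = volume.withDensity f) ∧
    (∀ w, Measurable (W w)) ∧
    ProbabilityTheory.iIndepFun W Pr ∧
    (∀ w, Measure.map (W w) Pr = P)

end Random

/-!
Let `k = |u ∧ v|`. Since `u_{k+1} ≠ v_{k+1}`, the translation `ω_{u|(k+1)}` enters
`Π^ω(u) - Π^ω(v)` only through the term `T_{u|k} ω_{u|(k+1)}`, so the difference is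
`F + T_{u|k} ω_{u|(k+1)}` with `F` independent of `ω_{u|(k+1)}`. For each value `y` of `F` the
event forces `ω_{u|(k+1)}` into `T_{u|k}⁻¹ B(-y, ρ)`, a set of Lebesgue measure
`|B(0, 1)| ρ^d / |det T_{u|k}| = |B(0, 1)| ρ^d / φ^d(T_{u|k})`, and the bounded density turns
this into the probability bound.
-/

open Matrix Metric

section SingularValues

variable (M : Matrix (Fin d) (Fin d) ℝ)

lemma sv_nonneg (m : ℕ) : 0 ≤ sv d M m := by
  unfold sv
  split
  · exact Real.sqrt_nonneg _
  · exact le_rfl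

lemma eigenvalues_transpose_mul_self_le_sv_zero_sq (i : Fin d) :
    (isHermitian_transpose_mul_self M).eigenvalues i ≤ sv d M 0 ^ 2 := by
  obtain ⟨d, rfl⟩ : ∃ d', d = d' + 1 := ⟨d - 1, by have := i.pos; omega⟩
  set f := fun j => √((isHermitian_transpose_mul_self M).eigenvalues j)
  have hsv : sv (d + 1) M 0 = f (Tuple.sort f (Fin.last d)) := by
    simp [sv, f]
  have hfi : f i ≤ sv (d + 1) M 0 := by
    rw [hsv]
    calc f i = f (Tuple.sort f ((Tuple.sort f).symm i)) := by simp
      _ ≤ f (Tuple.sort f (Fin.last d)) := Tuple.monotone_sort f (Fin.le_last _)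
  exact (Real.sqrt_le_left (sv_nonneg M 0)).1 hfi

open scoped MatrixOrder in
lemma norm_toEuclideanLin_le_sv_zero (x : Rd d) :
    ‖toEuclideanLin M x‖ ≤ sv d M 0 * ‖x‖ := by
  have hH := isHermitian_transpose_mul_self M
  have hspec : ∀ μ ∈ spectrum ℝ (Mᵀ * M), μ ≤ sv d M 0 ^ 2 := by
    intro μ hμ
    obtain ⟨i, rfl⟩ := hH.spectrum_real_eq_range_eigenvalues ▸ hμ
    exact eigenvalues_transpose_mul_self_le_sv_zero_sq M i
  have hpsd : (algebraMap ℝ _ (sv d M 0 ^ 2) - Mᵀ * M).PosSemidef :=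
    le_algebraMap_of_spectrum_le hspec hH.isSelfAdjoint
  have hnorm : ∀ y : Rd d, ‖y‖ ^ 2 = y.ofLp ⬝ᵥ y.ofLp := fun y => by
    rw [EuclideanSpace.real_norm_sq_eq]; simp [dotProduct, sq]
  have hsq : ‖toEuclideanLin M x‖ ^ 2 ≤ (sv d M 0 * ‖x‖) ^ 2 := by
    rw [mul_pow, hnorm, hnorm]
    simpa [sub_mulVec, dotProduct_sub, Algebra.algebraMap_eq_smul_one, ← mulVec_mulVec,
      dotProduct_mulVec, vecMul_transpose, toLpLin_apply, smul_mulVec]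
      using hpsd.re_dotProduct_nonneg x.ofLp
  exact (pow_le_pow_iff_left₀ (norm_nonneg _) (by positivity [sv_nonneg M 0]) two_ne_zero).1 hsq

lemma prod_sv_eq_abs_det : ∏ i ∈ Finset.range d, sv d M i = |M.det| := by
  set hH := isHermitian_transpose_mul_self M
  set f := fun j => √(hH.eigenvalues j)
  have hperm : ∏ i : Fin d, sv d M i = ∏ i : Fin d, f i := by
    simp only [sv, Fin.is_lt, dif_pos]
    exact Equiv.prod_comp (Fin.revPerm.trans (Tuple.sort f)) f
  have hdet : ∏ i, hH.eigenvalues i = M.det ^ 2 := by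
    simpa [det_mul, sq] using hH.det_eq_prod_eigenvalues.symm
  rw [← Fin.prod_univ_eq_prod_range, hperm, ← Real.sqrt_sq_eq_abs, ← hdet]
  exact (Real.sqrt_prod _ fun i _ =>
    (eigenvalues_conjTranspose_mul_self_nonneg M i : 0 ≤ hH.eigenvalues i)).symm

lemma phi_self_eq_abs_det : phi d M d = |M.det| := by
  rcases Nat.eq_zero_or_pos d with rfl | hd
  · simp [phi]
  have h0 : ¬ ((d : ℝ) ≤ 0) := by exact_mod_cast hd.not_ge
  rw [phi, if_neg h0, if_pos le_rfl, Nat.ceil_natCast, sub_self, zero_add, Real.rpow_one,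
    ← prod_sv_eq_abs_det, ← Finset.prod_range_succ, Nat.sub_add_cancel hd]

end SingularValues

section Words

variable (u : InfWord n)

lemma Tword_wTake_zero : Tword n T (wTake n u 0) = 1 := by
  simp [Tword]

lemma Tword_wTake_succ (j : ℕ) :
    Tword n T (wTake n u (j + 1)) = Tword n T (wTake n u j) * T j (u j) := by
  rw [Tword, List.ofFn_succ', List.concat_eq_append, List.prod_append]
  simp [Tword, wTake]

lemma det_Tword_wTake_ne_zero (hdet : ∀ (k : ℕ) (j : Fin (n k)), (T k j).det ≠ 0) (j : ℕ) :
    (Tword n T (wTake n u j)).det ≠ 0 := by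
  induction j with
  | zero => simp [Tword_wTake_zero]
  | succ j ih =>
    rw [Tword_wTake_succ, det_mul]
    exact mul_ne_zero ih (hdet j (u j))

lemma norm_toEuclideanLin_Tword_wTake_le {a : ℝ}
    (ha : ∀ (k : ℕ) (j : Fin (n k)), sv d (T k j) 0 ≤ a) (j : ℕ) (x : Rd d) :
    ‖toEuclideanLin (Tword n T (wTake n u j)) x‖ ≤ a ^ j * ‖x‖ := by
  have ha0 : 0 ≤ a := (sv_nonneg _ 0).trans (ha 0 (u 0))
  induction j generalizing x with
  | zero => simp [Tword_wTake_zero]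
  | succ j ih =>
    rw [Tword_wTake_succ, toLpLin_mul_same, LinearMap.comp_apply, pow_succ, mul_assoc]
    refine (ih _).trans (mul_le_mul_of_nonneg_left ?_ (pow_nonneg ha0 j))
    exact (norm_toEuclideanLin_le_sv_zero _ x).trans
      (mul_le_mul_of_nonneg_right (ha j (u j)) (norm_nonneg x))

end Words

section Probability

open ProbabilityTheory

lemma measurable_tsum_of_summable {α E : Type*} {mα : MeasurableSpace α} [AddCommMonoid E]
    [TopologicalSpace E] [TopologicalSpace.PseudoMetrizableSpace E] [MeasurableSpace E]
    [BorelSpace E] [MeasurableAdd₂ E] {g : ℕ → α → E} (hg : ∀ j, Measurable (g j))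
    (hsum : ∀ x, Summable fun j => g j x) : Measurable fun x => ∑' j, g j x :=
  measurable_of_tendsto_metrizable' atTop (fun _ => Finset.measurable_sum _ fun j _ => hg j)
    (tendsto_pi_nhds.2 fun x => (hsum x).hasSum.tendsto_sum_nat)

lemma _root_.ProbabilityTheory.iIndepFun.indepFun_of_measurable_biSup_compl
    {Ω ι β γ : Type*} {mΩ : MeasurableSpace Ω} {μ : Measure Ω} [IsProbabilityMeasure μ]
    [mβ : MeasurableSpace β] [MeasurableSpace γ] {f : ι → Ω → β}
    (hf : ∀ i, Measurable (f i)) (hind : iIndepFun f μ) (i : ι) {g : Ω → γ}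
    (hg : Measurable[⨆ j ∈ ({i}ᶜ : Set ι), mβ.comap (f j)] g) : IndepFun g (f i) μ := by
  have h := indep_biSup_compl (fun j => (hf j).comap_le) ((iIndepFun_iff_iIndep _ _ _).1 hind) {i}
  rw [iSup_singleton] at h
  rw [IndepFun_iff_Indep]
  exact (indep_of_indep_of_le_right h hg.comap_le).symm

lemma measure_preimage_prod_le_of_indepFun {Ω α β : Type*} {mΩ : MeasurableSpace Ω}
    [MeasurableSpace α] [MeasurableSpace β] {μ : Measure Ω} [IsProbabilityMeasure μ]
    {X : Ω → α} {Y : Ω → β} (hX : Measurable X) (hY : Measurable Y) (hXY : IndepFun X Y μ)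
    {S : Set (α × β)} (hS : MeasurableSet S) {B : ℝ≥0∞}
    (hB : ∀ x, μ.map Y (Prod.mk x ⁻¹' S) ≤ B) :
    μ ((fun ω => (X ω, Y ω)) ⁻¹' S) ≤ B := by
  have : IsProbabilityMeasure (μ.map X) := Measure.isProbabilityMeasure_map hX.aemeasurable
  calc μ ((fun ω => (X ω, Y ω)) ⁻¹' S) = ((μ.map X).prod (μ.map Y)) S := by
        rw [← (indepFun_iff_map_prod_eq_prod_map_map hX.aemeasurable hY.aemeasurable).1 hXY,
          Measure.map_apply (hX.prodMk hY) hS]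
    _ = ∫⁻ x, μ.map Y (Prod.mk x ⁻¹' S) ∂(μ.map X) := Measure.prod_apply hS
    _ ≤ ∫⁻ _, B ∂(μ.map X) := lintegral_mono hB
    _ = B := by simp

lemma withDensity_preimage_toEuclideanLin_closedBall_le {f : Rd d → ℝ≥0∞} {C : ℝ≥0}
    (hf : ∀ x, f x ≤ C) {M : Matrix (Fin d) (Fin d) ℝ} (hM : M.det ≠ 0) (y : Rd d)
    {ρ : ℝ} (hρ : 0 ≤ ρ) :
    volume.withDensity f (toEuclideanLin M ⁻¹' closedBall y ρ) ≤
      ENNReal.ofReal (C * volume.real (ball (0 : Rd d) 1) * ρ ^ d / |M.det|) := by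
  have hdet : LinearMap.det (toEuclideanLin M) = M.det := LinearMap.det_toLpLin 2 M
  have hs : MeasurableSet (toEuclideanLin M ⁻¹' closedBall y ρ) :=
    (LinearMap.continuous_of_finiteDimensional _).measurable measurableSet_closedBall
  calc volume.withDensity f (toEuclideanLin M ⁻¹' closedBall y ρ)
      ≤ ∫⁻ _ in toEuclideanLin M ⁻¹' closedBall y ρ, (C : ℝ≥0∞) := by
        rw [withDensity_apply _ hs]; exact lintegral_mono hf
    _ = C * (ENNReal.ofReal |(M.det)⁻¹| * (ENNReal.ofReal (ρ ^ d) *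
          volume (ball (0 : Rd d) 1))) := by
        rw [setLIntegral_const, Measure.addHaar_preimage_linearMap _ (hdet ▸ hM), hdet,
          Measure.addHaar_closedBall _ _ hρ, finrank_euclideanSpace_fin]
    _ = _ := by
        rw [← ofReal_measureReal measure_ball_lt_top.ne, ← ENNReal.ofReal_coe_nnreal,
          ← ENNReal.ofReal_mul (by positivity), ← ENNReal.ofReal_mul (by positivity),
          ← ENNReal.ofReal_mul (by positivity)]
        congr 1
        rw [abs_inv]
        ring

lemma exists_bounded_ae_eq_of_iIndepFun {Ω ι E : Type*} {mΩ : MeasurableSpace Ω} [Countable ι]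
    [NormedAddCommGroup E] [MeasurableSpace E] [OpensMeasurableSpace E] {μ : Measure Ω}
    {X : ι → Ω → E} (hX : ∀ i, Measurable (X i)) (hind : iIndepFun X μ) {D : Set E}
    (hD : Bornology.IsBounded D) (hXD : ∀ i, ∀ᵐ ω ∂μ, X i ω ∈ D) :
    ∃ (Y : ι → Ω → E) (R : ℝ), (∀ i, Measurable (Y i)) ∧ iIndepFun Y μ ∧
      (∀ i ω, ‖Y i ω‖ ≤ R) ∧ ∀ᵐ ω ∂μ, ∀ i, Y i ω = X i ω := by
  obtain ⟨R, hR, hDR⟩ := hD.subset_closedBall_lt 0 0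
  have hcut : Measurable ((closedBall (0 : E) R).indicator id) :=
    measurable_id.indicator isClosed_closedBall.measurableSet
  refine ⟨fun i ω => (closedBall 0 R).indicator id (X i ω), R, fun i => hcut.comp (hX i),
    hind.comp _ fun _ => hcut, fun i ω => ?_, ae_all_iff.2 fun i => ?_⟩
  · by_cases h : X i ω ∈ closedBall 0 R
    · simpa [indicator_of_mem h] using h
    · simpa [indicator_of_notMem h] using hR.le
  · filter_upwards [hXD i] with ω hω
    exact indicator_of_mem (hDR hω) id

end Probability

section RandomProjection

open ProbabilityTheory Function

variable {Ω : Type*} (W : (Σ k : ℕ, Word n (k + 1)) → Ω → Rd d)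

def piTerm (θ : Ω) (u : InfWord n) (k : ℕ) : Rd d :=
  toEuclideanLin (Tword n T (wTake n u k)) (W ⟨k, wTake n u (k + 1)⟩ θ)

lemma summable_piTerm {R a : ℝ} (hW : ∀ w θ, ‖W w θ‖ ≤ R)
    (ha : ∀ (k : ℕ) (j : Fin (n k)), sv d (T k j) 0 ≤ a) (ha1 : a < 1) (θ : Ω)
    (u : InfWord n) : Summable (piTerm n T W θ u) := by
  have ha0 : 0 ≤ a := (sv_nonneg _ 0).trans (ha 0 (u 0))
  refine .of_norm_bounded ((summable_geometric_of_lt_one ha0 ha1).mul_right R) fun k => ?_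
  exact (norm_toEuclideanLin_Tword_wTake_le n T u ha k _).trans
    (mul_le_mul_of_nonneg_left (hW _ _) (pow_nonneg ha0 k))

def piRemainder (u v : InfWord n) (k : ℕ) (θ : Ω) : Rd d :=
  ∑' j, (update (piTerm n T W θ u) k 0 j - piTerm n T W θ v j)

lemma PiRandom_sub_eq_piRemainder_add {θ : Ω} {u v : InfWord n}
    (hu : Summable (piTerm n T W θ u)) (hv : Summable (piTerm n T W θ v)) (k : ℕ) :
    PiRandom n T W θ u - PiRandom n T W θ v =
      piRemainder n T W u v k θ + piTerm n T W θ u k := by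
  change (∑' j, piTerm n T W θ u j) - ∑' j, piTerm n T W θ v j = _
  rw [hu.tsum_eq_add_tsum_ite k, piRemainder, (hu.update k 0).tsum_sub hv]
  simp only [update_apply]
  abel

lemma measurable_piRemainder_biSup_compl {R a : ℝ} (hW : ∀ w θ, ‖W w θ‖ ≤ R)
    (ha : ∀ (k : ℕ) (j : Fin (n k)), sv d (T k j) 0 ≤ a) (ha1 : a < 1) {u v : InfWord n}
    {k : ℕ} (huv : u k ≠ v k) :
    Measurable[⨆ w ∈ ({⟨k, wTake n u (k + 1)⟩}ᶜ : Set _),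
      MeasurableSpace.comap (W w) inferInstance] (piRemainder n T W u v k) := by
  set w₀ : Σ k : ℕ, Word n (k + 1) := ⟨k, wTake n u (k + 1)⟩
  have hlin (B : Matrix (Fin d) (Fin d) ℝ) : Measurable (toEuclideanLin B) :=
    (LinearMap.continuous_of_finiteDimensional _).measurable
  have hWm' (w) (hw : w ≠ w₀) : Measurable[⨆ w' ∈ ({w₀}ᶜ : Set _),
      MeasurableSpace.comap (W w') inferInstance] (W w) :=
    Measurable.of_comap_le (le_iSup₂ (f := fun w (_ : w ∈ ({w₀}ᶜ : Set _)) =>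
      MeasurableSpace.comap (W w) inferInstance) w hw)
  refine measurable_tsum_of_summable (fun j => .sub ?_ ((hlin _).comp (hWm' _ ?_)))
    fun θ => ((summable_piTerm n T W hW ha ha1 θ u).update k 0).sub
      (summable_piTerm n T W hW ha ha1 θ v)
  · simp only [update_apply]
    split_ifs with hj
    · exact measurable_const
    · exact (hlin _).comp (hWm' _ fun h => hj (congrArg Sigma.fst h))
  · intro h
    obtain rfl : j = k := congrArg Sigma.fst h
    have hvu : wTake n v (j + 1) = wTake n u (j + 1) := eq_of_heq (Sigma.mk.inj_iff.1 h).2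
    exact huv (congrFun hvu (Fin.last j)).symm

theorem measure_norm_PiRandom_sub_le_of_bounded [MeasurableSpace Ω] {Pr : Measure Ω}
    [IsProbabilityMeasure Pr] (hWm : ∀ w, Measurable (W w)) (hind : iIndepFun W Pr) {R : ℝ}
    (hW : ∀ w θ, ‖W w θ‖ ≤ R) {a : ℝ}
    (ha : ∀ (k : ℕ) (j : Fin (n k)), sv d (T k j) 0 ≤ a) (ha1 : a < 1)
    (hdet : ∀ (k : ℕ) (j : Fin (n k)), (T k j).det ≠ 0)
    {f : Rd d → ℝ≥0∞} {C : ℝ≥0} (hf : ∀ x, f x ≤ C) {u v : InfWord n} {k : ℕ}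
    (huv : u k ≠ v k) (hlaw : Pr.map (W ⟨k, wTake n u (k + 1)⟩) = volume.withDensity f)
    {ρ : ℝ} (hρ : 0 ≤ ρ) :
    Pr {θ | ‖PiRandom n T W θ u - PiRandom n T W θ v‖ ≤ ρ} ≤
      ENNReal.ofReal (C * volume.real (ball (0 : Rd d) 1) * ρ ^ d /
        |(Tword n T (wTake n u k)).det|) := by
  set M := Tword n T (wTake n u k)
  set w₀ : Σ k : ℕ, Word n (k + 1) := ⟨k, wTake n u (k + 1)⟩
  have hF := measurable_piRemainder_biSup_compl n T W hW ha ha1 huv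
  set S := {p : Rd d × Rd d | ‖p.1 + toEuclideanLin M p.2‖ ≤ ρ}
  have hS : MeasurableSet S := measurableSet_le (measurable_fst.add
    ((LinearMap.continuous_of_finiteDimensional _).measurable.comp measurable_snd)).norm
    measurable_const
  calc Pr {θ | ‖PiRandom n T W θ u - PiRandom n T W θ v‖ ≤ ρ}
      = Pr ((fun θ => (piRemainder n T W u v k θ, W w₀ θ)) ⁻¹' S) := by
        congr 1; ext θ
        change _ ≤ ρ ↔ _ ≤ ρ
        rw [PiRandom_sub_eq_piRemainder_add n T W (summable_piTerm n T W hW ha ha1 θ u)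
          (summable_piTerm n T W hW ha ha1 θ v) k]
        rfl
    _ ≤ _ := by
        refine measure_preimage_prod_le_of_indepFun
          (hF.mono (iSup₂_le fun w _ => (hWm w).comap_le) le_rfl) (hWm _)
          (hind.indepFun_of_measurable_biSup_compl hWm _ hF) hS fun y => ?_
        have hslice : Prod.mk y ⁻¹' S = toEuclideanLin M ⁻¹' closedBall (-y) ρ := by
          ext x; simp [S, dist_eq_norm, add_comm]
        rw [hslice, hlaw]
        exact withDensity_preimage_toEuclideanLin_closedBall_le hf
          (det_Tword_wTake_ne_zero n T u hdet k) _ hρ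

end RandomProjection

theorem prob_dist_le_general (d : ℕ) (n : ℕ → ℕ)
    (T : ∀ k : ℕ, Fin (n k) → Matrix (Fin d) (Fin d) ℝ) (hT : GoodMatrices n T)
    {Ω : Type*} [MeasurableSpace Ω] (Pr : Measure Ω)
    (W : (Σ k : ℕ, Word n (k + 1)) → Ω → Rd d)
    (D : Set (Rd d)) (P : Measure (Rd d))
    (hRT : RandomTranslations n Pr W D P) :
    ∃ c : ℝ, 0 < c ∧ ∀ u v : InfWord n, u ≠ v → ∀ ρ : ℝ, 0 < ρ →
      Pr {θ | ‖PiRandom n T W θ u - PiRandom n T W θ v‖ ≤ ρ} ≤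
        ENNReal.ofReal
          (c * ρ ^ d / phi d (Tword n T (wTake n u (meetLen n u v))) d) := by
  obtain ⟨hPr, hD, -, -, hPD, ⟨C, f, hf, rfl⟩, hWm, hind, hlaw⟩ := hRT
  obtain ⟨hdet, _, a, -, ha1, hsv⟩ := hT
  obtain ⟨W', R, hW'm, hind', hW'R, hWW'⟩ := exists_bounded_ae_eq_of_iIndepFun hWm hind hD
    fun w => ae_of_ae_map (hWm w).aemeasurable ((hlaw w).symm ▸ ae_iff.2 hPD)
  refine ⟨C * volume.real (ball (0 : Rd d) 1) + 1, by positivity, fun u v huv ρ hρ => ?_⟩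
  have hk : u (meetLen n u v) ≠ v (meetLen n u v) := Nat.sInf_mem (Function.ne_iff.1 huv)
  calc Pr {θ | ‖PiRandom n T W θ u - PiRandom n T W θ v‖ ≤ ρ}
      = Pr {θ | ‖PiRandom n T W' θ u - PiRandom n T W' θ v‖ ≤ ρ} := by
        refine measure_congr (hWW'.mono fun θ hθ => ?_)
        change (_ ≤ ρ) = (_ ≤ ρ)
        simp only [PiRandom, hθ]
    _ ≤ _ := measure_norm_PiRandom_sub_le_of_bounded n T W' hW'm hind' hW'R
          (fun k j => (hsv k j).2) ha1 hdet hf hk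
          ((Measure.map_congr (hWW'.mono fun θ h => h _)).trans (hlaw _)) hρ.le
    _ ≤ _ := by
        rw [phi_self_eq_abs_det]
        gcongr
        linarith

/-- **Lemma (distance probability estimate in the random-translation setting).**
There is a constant `c > 0` such that for all distinct `u, v ∈ Σ^∞` and all `ρ > 0`,
`P{ω : |Π^ω(u) − Π^ω(v)| ≤ ρ} ≤ c · ρ^d / φ^d(T_{u∧v})`. -/
theorem prob_dist_le (d : ℕ) (hd : 1 ≤ d) (n : ℕ → ℕ) (hn : ∀ k, 2 ≤ n k)
    (T : ∀ k : ℕ, Fin (n k) → Matrix (Fin d) (Fin d) ℝ) (hT : GoodMatrices n T)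
    {Ω : Type*} [MeasurableSpace Ω] (Pr : Measure Ω)
    (W : (Σ k : ℕ, Word n (k + 1)) → Ω → Rd d)
    (D : Set (Rd d)) (P : Measure (Rd d))
    (hRT : RandomTranslations n Pr W D P) :
    ∃ c : ℝ, 0 < c ∧ ∀ u v : InfWord n, u ≠ v → ∀ ρ : ℝ, 0 < ρ →
      Pr {θ | ‖PiRandom n T W θ u - PiRandom n T W θ v‖ ≤ ρ} ≤
        ENNReal.ofReal
          (c * ρ ^ d / phi d (Tword n T (wTake n u (meetLen n u v))) d) :=
  prob_dist_le_general d n T hT Pr W D P hRT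

end MoranPaper
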